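/- For all n ≥ 1: ∑_{k=1}^{n} (-1)^{k-1}·T(n,k)·(k!)² = (-1)^{n-1}·G_{2n+2}, where T(n,k) are the central factorial numbers of the second kind. -/

import Mathlib

/-- Central factorial numbers of the second kind:
T(n,k) = T(n-1,k-1) + k² T(n-1,k), T(0,k)=[k=0], T(n,0)=[n=0]. -/
def centralFactorialT : ℕ → ℕ → ℕ
  | 0, 0 => 1
  | 0, _ + 1 => 0
  | _ + 1, 0 => 0
  | n + 1, k + 1 => centralFactorialT n k + (k + 1) ^ 2 * centralFactorialT n (k + 1)

open PowerSeries in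
/-- The exponential generating function 2z/(1+e^z) of the Genocchi numbers. -/
noncomputable def genocchiSeries : PowerSeries ℚ :=
  2 * PowerSeries.X * (1 + PowerSeries.exp ℚ)⁻¹

/-- The unsigned Genocchi numbers `G (2n)` : since
2z/(1+e^z) = z + ∑_{n≥1} (-1)^n G_{2n} z^{2n}/(2n)!, we recover
G_{2n} = (-1)^n (2n)! [z^{2n}] (2z/(1+e^z)); this also gives G 0 = 0. -/
noncomputable def genocchi (n : ℕ) : ℚ :=
  (-1) ^ n * (2 * n).factorial * PowerSeries.coeff (R := ℚ) (2 * n) genocchiSeries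

/-!
Write `V = e^z + e^{-z} - 2 = (2 sinh (z/2))^2` and `W = 2 sinh z`, so that `V' = W`, `W' = V + 2`
and `W^2 = V^2 + 4V`. These relations give `(V^k)'' = k^2 V^k + 2k(2k-1) V^(k-1)`, which is the
recurrence of `T`, so `V^k / (2k)! = ∑ₙ T(n,k) z^(2n) / (2n)!`. The left-hand side is therefore
`(2n)!` times the coefficient of `z^(2n)` in `H = f(V)`, where
`f(y) = ∑_{k ≥ 1} (-1)^(k-1) y^k / C(2k,k)`. The recurrence of `1 / C(2k,k)` says
`(y^2 + 4y) f' = y + (2 - y) f`, and by the chain rule `W H' = V + (2 - V) H`. With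
`q = 1/(1 + e^z)` and `G = 2zq` the Genocchi series, `1 + G''` solves the same equation (a
polynomial identity in `z` and `q`, since `q' = q^2 - q`), and both solutions vanish to order two.
The equation determines a solution from its coefficients of `1` and `z`, so `H = 1 + G''`, and
comparing coefficients of `z^(2n)` gives the theorem.
-/

open PowerSeries Finset

@[simp]
lemma PowerSeries.derivative_ofNat {R : Type*} [CommSemiring R] (n : ℕ) [n.AtLeastTwo] :
    d⁄dX R (no_index (OfNat.ofNat n : R⟦X⟧)) = 0 :=
  Derivation.map_natCast (d⁄dX R) n

lemma PowerSeries.coeff_derivative_derivative {R : Type*} [CommSemiring R] (f : R⟦X⟧)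
    (n : ℕ) :
    coeff n (d⁄dX R (d⁄dX R f)) = (n + 1) * (n + 2) * coeff (n + 2) f := by
  rw [coeff_derivative, coeff_derivative]
  push_cast
  ring

theorem PowerSeries.eq_zero_of_mul_derivative_eq_mul {R : Type*} [CommRing R] [IsDomain R]
    {W A D : R⟦X⟧} (hW : constantCoeff W = 0)
    (hres : ∀ n : ℕ, 2 ≤ n → (n : R) * coeff 1 W ≠ constantCoeff A)
    (h : W * d⁄dX R D = A * D) (h0 : coeff 0 D = 0) (h1 : coeff 1 D = 0) : D = 0 := by
  ext N
  rw [map_zero]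
  induction N using Nat.strong_induction_on with
  | _ N ih =>
  obtain rfl | rfl | hN : N = 0 ∨ N = 1 ∨ 2 ≤ N := by omega
  · exact h0
  · exact h1
  obtain ⟨E, rfl⟩ : X ^ N ∣ D := X_pow_dvd_iff.mpr ih
  obtain ⟨W₁, rfl⟩ : X ∣ W := X_dvd_iff.mpr hW
  obtain ⟨M, rfl⟩ : ∃ M, N = M + 1 := ⟨N - 1, by omega⟩
  -- After dividing by `X ^ N`, the constant term of the equation is `(N W₁(0) - A(0)) E(0) = 0`.
  have key : X ^ (M + 1) * (W₁ * (((M : R⟦X⟧) + 1) * E + X * d⁄dX R E)) =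
      X ^ (M + 1) * (A * E) := by
    rw [Derivation.leibniz, derivative_pow, derivative_X, smul_eq_mul, smul_eq_mul] at h
    push_cast at h
    linear_combination h
  have hE := congrArg constantCoeff (mul_left_cancel₀ (pow_ne_zero _ X_ne_zero) key)
  simp only [map_mul, map_add, map_natCast, constantCoeff_one, constantCoeff_X, zero_mul,
    add_zero] at hE
  have hres' := hres (M + 1) hN
  rw [Nat.cast_succ, coeff_succ_X_mul, coeff_zero_eq_constantCoeff_apply] at hres'
  rw [coeff_X_pow_mul', if_pos le_rfl, Nat.sub_self, coeff_zero_eq_constantCoeff_apply]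
  refine (mul_eq_zero.mp ?_).resolve_left (sub_ne_zero.mpr hres')
  linear_combination hE

lemma exp_mul_inv_exp (K : Type*) [Field K] [Algebra ℚ K] : exp K * (exp K)⁻¹ = 1 :=
  PowerSeries.mul_inv_cancel _ (by simp [constantCoeff_exp])

lemma derivative_inv_exp {K : Type*} [Field K] [Algebra ℚ K] :
    d⁄dX K (exp K)⁻¹ = -(exp K)⁻¹ := by
  rw [derivative_inv', derivative_exp]
  linear_combination (-(exp K)⁻¹) * exp_mul_inv_exp K

noncomputable def twoCoshSubTwo : ℚ⟦X⟧ := exp ℚ + (exp ℚ)⁻¹ - 2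

noncomputable def twoSinh : ℚ⟦X⟧ := exp ℚ - (exp ℚ)⁻¹

@[simp]
lemma constantCoeff_twoCoshSubTwo : constantCoeff twoCoshSubTwo = 0 := by
  norm_num [twoCoshSubTwo, constantCoeff_exp, map_ofNat]

@[simp]
lemma constantCoeff_twoSinh : constantCoeff twoSinh = 0 := by
  simp [twoSinh, constantCoeff_exp]

lemma derivative_twoCoshSubTwo : d⁄dX ℚ twoCoshSubTwo = twoSinh := by
  simp only [twoCoshSubTwo, twoSinh, map_sub, map_add, derivative_exp, derivative_inv_exp,
    derivative_ofNat]
  ring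

lemma derivative_twoSinh : d⁄dX ℚ twoSinh = twoCoshSubTwo + 2 := by
  simp only [twoCoshSubTwo, twoSinh, map_sub, derivative_exp, derivative_inv_exp]
  ring

lemma twoSinh_sq : twoSinh ^ 2 = twoCoshSubTwo ^ 2 + 4 * twoCoshSubTwo := by
  simp only [twoCoshSubTwo, twoSinh]
  linear_combination (-4 : ℚ⟦X⟧) * exp_mul_inv_exp ℚ

lemma coeff_one_twoSinh : coeff 1 twoSinh = 2 := by
  have h := coeff_derivative twoSinh 0
  rw [derivative_twoSinh, coeff_zero_eq_constantCoeff_apply] at h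
  simpa [map_ofNat] using h.symm

lemma derivative_derivative_twoCoshSubTwo_pow_succ (k : ℕ) :
    d⁄dX ℚ (d⁄dX ℚ (twoCoshSubTwo ^ (k + 1))) =
      C (((k : ℚ) + 1) ^ 2) * twoCoshSubTwo ^ (k + 1) +
        C (2 * ((k : ℚ) + 1) * (2 * k + 1)) * twoCoshSubTwo ^ k := by
  simp only [map_add, map_mul, map_pow, map_natCast, map_one, map_ofNat, derivative_pow,
    Derivation.leibniz, derivative_twoCoshSubTwo, derivative_twoSinh, smul_eq_mul,
    Derivation.map_natCast]
  cases k with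
  | zero => simp
  | succ k =>
    push_cast
    linear_combination (k + 2 : ℚ⟦X⟧) * (k + 1) * twoCoshSubTwo ^ k * twoSinh_sq

lemma coeff_two_mul_add_one_twoCoshSubTwo_pow (m k : ℕ) :
    coeff (2 * m + 1) (twoCoshSubTwo ^ k) = 0 := by
  induction m generalizing k with
  | zero =>
    have h := coeff_derivative (twoCoshSubTwo ^ k) 0
    rw [derivative_pow, derivative_twoCoshSubTwo, coeff_zero_eq_constantCoeff_apply] at h
    simpa using h.symm
  | succ m ih =>
    cases k with
    | zero => simp [coeff_one]
    | succ k =>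
      have h := coeff_derivative_derivative (twoCoshSubTwo ^ (k + 1)) (2 * m + 1)
      rw [derivative_derivative_twoCoshSubTwo_pow_succ] at h
      simp only [map_add, coeff_C_mul, ih, mul_zero, add_zero] at h
      have hpos : ((2 * m + 1 : ℕ) + 1 : ℚ) * ((2 * m + 1 : ℕ) + 2) ≠ 0 := by positivity
      rw [show 2 * (m + 1) + 1 = 2 * m + 1 + 2 by ring]
      exact (mul_eq_zero.mp h.symm).resolve_left hpos

lemma centralFactorialT_eq_zero_of_lt {n k : ℕ} (h : n < k) : centralFactorialT n k = 0 := by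
  induction n generalizing k with
  | zero =>
    obtain ⟨k, rfl⟩ := Nat.exists_eq_add_one_of_ne_zero (by omega : k ≠ 0)
    rfl
  | succ n ih =>
    obtain ⟨k, rfl⟩ := Nat.exists_eq_add_one_of_ne_zero (by omega : k ≠ 0)
    simp [centralFactorialT, ih (by omega : n < k), ih (by omega : n < k + 1)]

lemma factorial_two_mul_succ (n : ℕ) :
    (2 * (n + 1)).factorial = (2 * n + 1) * (2 * n + 2) * (2 * n).factorial := by
  rw [show 2 * (n + 1) = 2 * n + 1 + 1 by ring, Nat.factorial_succ, Nat.factorial_succ]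
  ring

lemma factorial_mul_coeff_twoCoshSubTwo_pow (m k : ℕ) :
    (2 * m).factorial * coeff (2 * m) (twoCoshSubTwo ^ k) =
      (2 * k).factorial * centralFactorialT m k := by
  induction m generalizing k with
  | zero => cases k <;> simp [centralFactorialT]
  | succ m ih =>
    cases k with
    | zero => simp [coeff_one, centralFactorialT]
    | succ k =>
      have h := coeff_derivative_derivative (twoCoshSubTwo ^ (k + 1)) (2 * m)
      rw [derivative_derivative_twoCoshSubTwo_pow_succ] at h
      simp only [map_add, coeff_C_mul] at h
      have ih' := ih (k + 1)
      rw [factorial_two_mul_succ] at ih'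
      rw [factorial_two_mul_succ, factorial_two_mul_succ, show 2 * (m + 1) = 2 * m + 2 by ring]
      simp only [centralFactorialT]
      push_cast at h ih' ⊢
      linear_combination (-((2 * m).factorial : ℚ)) * h + (k + 1 : ℚ) ^ 2 * ih' +
        (2 * (k + 1 : ℚ) * (2 * k + 1)) * ih k

noncomputable def altInvCentralBinomSeries : ℚ⟦X⟧ :=
  mk fun k => if k = 0 then 0 else (-1) ^ (k - 1) / k.centralBinom

lemma coeff_altInvCentralBinomSeries_mul_factorial {k : ℕ} (hk : k ≠ 0) :
    coeff k altInvCentralBinomSeries * (2 * k).factorial = (-1) ^ (k - 1) * k.factorial ^ 2 := by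
  have h : (k.centralBinom * k.factorial ^ 2 : ℚ) = (2 * k).factorial := by
    rw [Nat.centralBinom_eq_two_mul_choose, sq, ← mul_assoc]
    exact_mod_cast (by simpa [two_mul] using
      Nat.choose_mul_factorial_mul_factorial (by omega : k ≤ 2 * k))
  have := Nat.cast_ne_zero (R := ℚ) |>.mpr (Nat.centralBinom_ne_zero k)
  rw [altInvCentralBinomSeries, coeff_mk, if_neg hk, ← h]
  field_simp

lemma altInvCentralBinomSeries_ode :
    X * (X + 4) * d⁄dX ℚ altInvCentralBinomSeries =
      X + (2 - X) * altInvCentralBinomSeries := by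
  rw [show (4 : ℚ⟦X⟧) = C 4 from (map_ofNat C 4).symm,
    show (2 : ℚ⟦X⟧) = C 2 from (map_ofNat C 2).symm]
  ext n
  rcases n with _ | _ | k
  · simp [altInvCentralBinomSeries]
  all_goals simp only [mul_assoc, add_mul, sub_mul, map_add, map_sub, coeff_succ_X_mul,
    coeff_zero_X_mul, coeff_C_mul, coeff_derivative, coeff_X, altInvCentralBinomSeries, coeff_mk]
  · norm_num [Nat.centralBinom]
  · have h : ((k + 2) * (k + 2).centralBinom : ℚ) = 2 * (2 * k + 3) * (k + 1).centralBinom := by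
      exact_mod_cast Nat.succ_mul_centralBinom_succ (k + 1)
    have := Nat.cast_ne_zero (R := ℚ) |>.mpr (Nat.centralBinom_ne_zero (k + 1))
    have := Nat.cast_ne_zero (R := ℚ) |>.mpr (Nat.centralBinom_ne_zero (k + 2))
    simp only [Nat.add_eq_zero_iff, one_ne_zero, and_false, ↓reduceIte, add_tsub_cancel_right,
      Nat.cast_add, Nat.cast_one, Nat.add_eq_right, zero_add]
    field_simp
    linear_combination (-1) ^ k * h

lemma hasSubst_twoCoshSubTwo : HasSubst twoCoshSubTwo :=
  HasSubst.of_constantCoeff_zero' constantCoeff_twoCoshSubTwo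

lemma altInvCentralBinomSeries_subst_ode :
    twoSinh * d⁄dX ℚ (altInvCentralBinomSeries.subst twoCoshSubTwo) =
      twoCoshSubTwo + (2 - twoCoshSubTwo) * altInvCentralBinomSeries.subst twoCoshSubTwo := by
  have h := congrArg (substAlgHom hasSubst_twoCoshSubTwo) altInvCentralBinomSeries_ode
  simp only [map_mul, map_add, map_sub, map_ofNat, substAlgHom_X, coe_substAlgHom] at h
  rw [derivative_subst hasSubst_twoCoshSubTwo, derivative_twoCoshSubTwo]
  linear_combination h + (d⁄dX ℚ altInvCentralBinomSeries).subst twoCoshSubTwo * twoSinh_sq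

lemma coeff_two_mul_add_one_subst_twoCoshSubTwo (f : ℚ⟦X⟧) (m : ℕ) :
    coeff (2 * m + 1) (f.subst twoCoshSubTwo) = 0 := by
  simp [coeff_subst' hasSubst_twoCoshSubTwo, coeff_two_mul_add_one_twoCoshSubTwo_pow]

lemma factorial_mul_coeff_altInvCentralBinomSeries_subst (m : ℕ) :
    (2 * m).factorial * coeff (2 * m) (altInvCentralBinomSeries.subst twoCoshSubTwo) =
      ∑ k ∈ Icc 1 m, (-1 : ℚ) ^ (k - 1) * centralFactorialT m k * k.factorial ^ 2 := by
  rw [coeff_subst' hasSubst_twoCoshSubTwo, finsum_eq_sum_of_support_subset (s := Icc 1 m),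
    mul_sum]
  · refine sum_congr rfl fun k hk => ?_
    have hk0 : k ≠ 0 := Nat.one_le_iff_ne_zero.mp (mem_Icc.mp hk).1
    rw [smul_eq_mul, mul_left_comm, factorial_mul_coeff_twoCoshSubTwo_pow, ← mul_assoc,
      coeff_altInvCentralBinomSeries_mul_factorial hk0]
    ring
  · intro k hk
    rw [Function.mem_support] at hk
    rw [coe_Icc, Set.mem_Icc]
    by_contra hout
    apply hk
    rcases Nat.eq_zero_or_pos k with rfl | hpos
    · simp [altInvCentralBinomSeries]
    · have h := factorial_mul_coeff_twoCoshSubTwo_pow m k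
      rw [centralFactorialT_eq_zero_of_lt (by omega : m < k), Nat.cast_zero, mul_zero] at h
      rw [(mul_eq_zero.mp h).resolve_left (by positivity), smul_zero]

noncomputable def invOnePlusExp : ℚ⟦X⟧ := (1 + exp ℚ)⁻¹

lemma one_add_exp_mul_invOnePlusExp : (1 + exp ℚ) * invOnePlusExp = 1 :=
  PowerSeries.mul_inv_cancel _ (by simp [constantCoeff_exp])

@[simp]
lemma constantCoeff_invOnePlusExp : constantCoeff invOnePlusExp = 1 / 2 := by
  have h := congrArg constantCoeff one_add_exp_mul_invOnePlusExp
  rw [map_mul, map_add, constantCoeff_one, constantCoeff_exp] at h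
  linarith

lemma derivative_invOnePlusExp :
    d⁄dX ℚ invOnePlusExp = invOnePlusExp ^ 2 - invOnePlusExp := by
  have h : d⁄dX ℚ invOnePlusExp = -invOnePlusExp ^ 2 * d⁄dX ℚ (1 + exp ℚ) :=
    derivative_inv' _
  rw [h, map_add, derivative_one, derivative_exp, zero_add]
  linear_combination (-invOnePlusExp) * one_add_exp_mul_invOnePlusExp

lemma invOnePlusExp_sub_sq_mul_twoSinh :
    (invOnePlusExp - invOnePlusExp ^ 2) * twoSinh = 1 - 2 * invOnePlusExp := by
  rw [twoSinh]
  linear_combination (1 - invOnePlusExp + invOnePlusExp * (exp ℚ)⁻¹) *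
    one_add_exp_mul_invOnePlusExp - invOnePlusExp ^ 2 * exp_mul_inv_exp ℚ

lemma invOnePlusExp_sub_sq_mul_twoCoshSubTwo :
    (invOnePlusExp - invOnePlusExp ^ 2) * twoCoshSubTwo = (1 - 2 * invOnePlusExp) ^ 2 := by
  rw [twoCoshSubTwo]
  linear_combination (1 - invOnePlusExp - invOnePlusExp * (exp ℚ)⁻¹) *
    one_add_exp_mul_invOnePlusExp + invOnePlusExp ^ 2 * exp_mul_inv_exp ℚ

lemma derivative_derivative_genocchiSeries :
    d⁄dX ℚ (d⁄dX ℚ genocchiSeries) = 4 * (invOnePlusExp ^ 2 - invOnePlusExp) +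
      2 * X * (2 * invOnePlusExp - 1) * (invOnePlusExp ^ 2 - invOnePlusExp) := by
  rw [show genocchiSeries = 2 * X * invOnePlusExp from rfl]
  simp only [Derivation.leibniz, Derivation.leibniz_pow, map_add, map_sub,
    derivative_invOnePlusExp, derivative_X, derivative_ofNat, derivative_one, map_zero, smul_eq_mul]
  ring

lemma derivative_derivative_derivative_genocchiSeries :
    d⁄dX ℚ (d⁄dX ℚ (d⁄dX ℚ genocchiSeries)) = (invOnePlusExp ^ 2 - invOnePlusExp) *
      (6 * (2 * invOnePlusExp - 1) + 2 * X * (6 * invOnePlusExp ^ 2 - 6 * invOnePlusExp + 1)) := by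
  rw [derivative_derivative_genocchiSeries]
  simp only [Derivation.leibniz, Derivation.leibniz_pow, map_add, map_sub,
    derivative_invOnePlusExp, derivative_X, derivative_ofNat, derivative_one, smul_eq_mul]
  ring

lemma one_add_derivative_derivative_genocchiSeries_ode :
    twoSinh * d⁄dX ℚ (1 + d⁄dX ℚ (d⁄dX ℚ genocchiSeries)) =
      twoCoshSubTwo + (2 - twoCoshSubTwo) * (1 + d⁄dX ℚ (d⁄dX ℚ genocchiSeries)) := by
  have hp : invOnePlusExp - invOnePlusExp ^ 2 ≠ 0 := fun h => by
    have := congrArg constantCoeff h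
    norm_num at this
  apply mul_left_cancel₀ hp
  rw [map_add, derivative_one, zero_add, derivative_derivative_derivative_genocchiSeries,
    derivative_derivative_genocchiSeries]
  set q := invOnePlusExp
  linear_combination
    (q ^ 2 - q) * (6 * (2 * q - 1) + 2 * X * (6 * q ^ 2 - 6 * q + 1)) *
      invOnePlusExp_sub_sq_mul_twoSinh +
    (4 * (q ^ 2 - q) + 2 * X * (2 * q - 1) * (q ^ 2 - q)) * invOnePlusExp_sub_sq_mul_twoCoshSubTwo

lemma altInvCentralBinomSeries_subst_eq :
    altInvCentralBinomSeries.subst twoCoshSubTwo = 1 + d⁄dX ℚ (d⁄dX ℚ genocchiSeries) := by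
  rw [← sub_eq_zero]
  refine eq_zero_of_mul_derivative_eq_mul constantCoeff_twoSinh (A := 2 - twoCoshSubTwo)
    ?_ ?_ ?_ ?_
  · intro n hn
    rw [coeff_one_twoSinh, map_sub, constantCoeff_twoCoshSubTwo, sub_zero, map_ofNat]
    norm_cast
    omega
  · rw [map_sub, mul_sub, mul_sub, altInvCentralBinomSeries_subst_ode,
      one_add_derivative_derivative_genocchiSeries_ode]
    ring
  · have h := factorial_mul_coeff_altInvCentralBinomSeries_subst 0
    simp only [mul_zero, Nat.factorial_zero, Nat.cast_one, one_mul, zero_lt_one,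
      Icc_eq_empty_of_lt, sum_empty] at h
    rw [map_sub, h, map_add, derivative_derivative_genocchiSeries,
      coeff_zero_eq_constantCoeff_apply]
    norm_num [map_ofNat]
  · have h := coeff_derivative (1 + d⁄dX ℚ (d⁄dX ℚ genocchiSeries)) 0
    rw [map_add, derivative_one, zero_add, derivative_derivative_derivative_genocchiSeries] at h
    rw [map_sub, coeff_two_mul_add_one_subst_twoCoshSubTwo _ 0, zero_sub, neg_eq_zero]
    simpa [map_ofNat] using h.symm

theorem sum_centralFactorialT_sq_genocchi (n : ℕ) (hn : 1 ≤ n) :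
    ∑ k ∈ Finset.Icc 1 n, (-1 : ℚ) ^ (k - 1) * centralFactorialT n k *
        ((k.factorial : ℚ)) ^ 2 =
      (-1) ^ (n - 1) * genocchi (n + 1) := by
  have hsign : (-1 : ℚ) ^ (n - 1) * (-1) ^ (n + 1) = 1 := by
    rw [← pow_add, show n - 1 + (n + 1) = 2 * n by omega, pow_mul, neg_one_sq, one_pow]
  calc ∑ k ∈ Icc 1 n, (-1 : ℚ) ^ (k - 1) * centralFactorialT n k * (k.factorial : ℚ) ^ 2
      = (2 * n).factorial * coeff (2 * n) (altInvCentralBinomSeries.subst twoCoshSubTwo) :=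
        (factorial_mul_coeff_altInvCentralBinomSeries_subst n).symm
    _ = (2 * (n + 1)).factorial * coeff (2 * (n + 1)) genocchiSeries := by
        rw [altInvCentralBinomSeries_subst_eq, map_add, coeff_one, if_neg (by omega), zero_add,
          coeff_derivative_derivative, factorial_two_mul_succ,
          show 2 * (n + 1) = 2 * n + 2 by ring]
        push_cast
        ring
    _ = (-1) ^ (n - 1) * genocchi (n + 1) := by
        rw [genocchi]
        linear_combination
          (-((2 * (n + 1)).factorial * coeff (2 * (n + 1)) genocchiSeries)) * hsign
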